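/- For $\alpha > 2$ the series $\sum_{k>0} k^{2(1-\alpha)}(1+a^2k^2)^{-s(1+\alpha)} \sum_{h \neq 0, k} \frac{1}{4h^2(k-h)^2(1+a^2h^2)^{2s}}$ converges, where sums are over 2D lattice points. -/

import Mathlib

/-!
The factor `4 (1 + a²|h|²)^{2s}` is at least `1`, so by `xy ≤ x² + y²` each inner term is at most
`|h|⁻⁴ + |k - h|⁻⁴`. Both are summable over `ℤ²` with the same sum `S` (translate by `k`), so every
inner series converges and is bounded by `2S` uniformly in `k`. The outer terms are then at most
`2S |k|^{2(1-α)}`, summable over `ℤ²` because `2(α - 1) > 2`; this lattice sum is compared with the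
sup-norm sum `∑ ‖x‖^{-r}`, `r > 2`, used for Eisenstein series.
-/

noncomputable section

def latSq (k : ℤ × ℤ) : ℝ := (k.1 : ℝ) ^ 2 + (k.2 : ℝ) ^ 2

/-- `k > 0` for lattice points: `k₁ > 0`, or `k₁ = 0` and `k₂ > 0`. -/
def PosMode (k : ℤ × ℤ) : Prop := 0 < k.1 ∨ (k.1 = 0 ∧ 0 < k.2)

abbrev PosM := {k : ℤ × ℤ // PosMode k}

lemma latSq_nonneg (k : ℤ × ℤ) : 0 ≤ latSq k := by unfold latSq; positivity

lemma latSq_zero : latSq 0 = 0 := by simp [latSq]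

lemma norm_finTwoArrowEquiv_symm_sq_le_latSq (k : ℤ × ℤ) :
    ‖(finTwoArrowEquiv ℤ).symm k‖ ^ 2 ≤ latSq k := by
  have hle : ‖(finTwoArrowEquiv ℤ).symm k‖ ≤ √(latSq k) := by
    refine (pi_norm_le_iff_of_nonneg (Real.sqrt_nonneg _)).2 fun i => ?_
    rw [Int.norm_eq_abs]
    refine Real.abs_le_sqrt ?_
    fin_cases i <;> simp [latSq] <;> positivity
  calc ‖(finTwoArrowEquiv ℤ).symm k‖ ^ 2 ≤ √(latSq k) ^ 2 := by gcongr
    _ = latSq k := Real.sq_sqrt (latSq_nonneg k)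

lemma summable_latSq_rpow {t : ℝ} (ht : t < -1) : Summable fun k : ℤ × ℤ => latSq k ^ t := by
  have hnorm := EisensteinSeries.summable_one_div_norm_rpow (k := -2 * t) (by linarith)
  rw [← (finTwoArrowEquiv ℤ).symm.summable_iff] at hnorm
  refine hnorm.of_nonneg_of_le (fun k => Real.rpow_nonneg (latSq_nonneg k) t) fun k => ?_
  rcases eq_or_ne k 0 with rfl | hk
  · rw [latSq_zero, Real.zero_rpow (by linarith)]
    exact Real.rpow_nonneg (norm_nonneg _) _
  · have hv : 0 < ‖(finTwoArrowEquiv ℤ).symm k‖ := norm_pos_iff.2 fun h0 => hk <|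
      (by simpa using congrArg (finTwoArrowEquiv ℤ) h0 : k = (0, 0)).trans Prod.mk_zero_zero
    calc latSq k ^ t ≤ (‖(finTwoArrowEquiv ℤ).symm k‖ ^ 2) ^ t :=
          Real.rpow_le_rpow_of_nonpos (by positivity)
            (norm_finTwoArrowEquiv_symm_sq_le_latSq k) (by linarith)
      _ = ‖(finTwoArrowEquiv ℤ).symm k‖ ^ (-(-2 * t)) := by
          rw [← Real.rpow_natCast, ← Real.rpow_mul (norm_nonneg _)]; norm_num

lemma summable_inv_latSq_sq : Summable fun k : ℤ × ℤ => (latSq k)⁻¹ ^ 2 :=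
  (summable_latSq_rpow (t := -2) (by norm_num)).congr fun k => by
    rw [Real.rpow_neg (latSq_nonneg k), Real.rpow_two, inv_pow]

lemma summable_inv_latSq_sub_sq (k : ℤ × ℤ) :
    Summable fun h : ℤ × ℤ => (latSq (k - h))⁻¹ ^ 2 :=
  (Equiv.subLeft k).summable_iff.2 summable_inv_latSq_sq

lemma one_le_one_add_sq_mul_latSq (a : ℝ) (h : ℤ × ℤ) : 1 ≤ 1 + a ^ 2 * latSq h :=
  le_add_of_nonneg_right (mul_nonneg (sq_nonneg a) (latSq_nonneg h))

/-- At `h = 0` and `h = k` the coefficient is `1 / 0 = 0`, so it can be summed over all of `ℤ²`. -/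
def interactionCoeff (a s : ℝ) (k h : ℤ × ℤ) : ℝ :=
  1 / (4 * latSq h * latSq (k - h) * (1 + a ^ 2 * latSq h) ^ (2 * s))

section interactionCoeff

variable {a s : ℝ}

lemma interactionCoeff_nonneg (k h : ℤ × ℤ) : 0 ≤ interactionCoeff a s k h := by
  have := Real.rpow_nonneg (zero_le_one.trans (one_le_one_add_sq_mul_latSq a h)) (2 * s)
  have := latSq_nonneg h
  have := latSq_nonneg (k - h)
  unfold interactionCoeff
  positivity

lemma interactionCoeff_le (hs : 0 ≤ s) (k h : ℤ × ℤ) :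
    interactionCoeff a s k h ≤ (latSq h)⁻¹ ^ 2 + (latSq (k - h))⁻¹ ^ 2 := by
  have hA := inv_nonneg.2 (latSq_nonneg h)
  have hB := inv_nonneg.2 (latSq_nonneg (k - h))
  have hC : 1 ≤ 4 * (1 + a ^ 2 * latSq h) ^ (2 * s) := by
    linarith [Real.one_le_rpow (one_le_one_add_sq_mul_latSq a h) (by positivity : 0 ≤ 2 * s)]
  calc interactionCoeff a s k h
      = (latSq h)⁻¹ * (latSq (k - h))⁻¹ * (4 * (1 + a ^ 2 * latSq h) ^ (2 * s))⁻¹ := by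
        unfold interactionCoeff; ring
    _ ≤ (latSq h)⁻¹ * (latSq (k - h))⁻¹ :=
        mul_le_of_le_one_right (mul_nonneg hA hB) (inv_le_one_of_one_le₀ hC)
    _ ≤ _ := by linarith [two_mul_le_add_sq (latSq h)⁻¹ (latSq (k - h))⁻¹, mul_nonneg hA hB]

lemma summable_interactionCoeff (hs : 0 ≤ s) (k : ℤ × ℤ) : Summable (interactionCoeff a s k) :=
  (summable_inv_latSq_sq.add (summable_inv_latSq_sub_sq k)).of_nonneg_of_le
    (interactionCoeff_nonneg k) (interactionCoeff_le hs k)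

lemma tsum_interactionCoeff_le (hs : 0 ≤ s) (k : ℤ × ℤ) :
    ∑' h, interactionCoeff a s k h ≤ 2 * ∑' h : ℤ × ℤ, (latSq h)⁻¹ ^ 2 := by
  calc ∑' h, interactionCoeff a s k h
      ≤ ∑' h, ((latSq h)⁻¹ ^ 2 + (latSq (k - h))⁻¹ ^ 2) :=
        (summable_interactionCoeff hs k).tsum_le_tsum (interactionCoeff_le hs k)
          (summable_inv_latSq_sq.add (summable_inv_latSq_sub_sq k))
    _ = 2 * ∑' h : ℤ × ℤ, (latSq h)⁻¹ ^ 2 := by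
        rw [summable_inv_latSq_sq.tsum_add (summable_inv_latSq_sub_sq k),
          show ∑' h, (latSq (k - h))⁻¹ ^ 2 = ∑' h : ℤ × ℤ, (latSq h)⁻¹ ^ 2 from
            (Equiv.subLeft k).tsum_eq fun h => (latSq h)⁻¹ ^ 2, two_mul]

end interactionCoeff

theorem avgEuler_vectorField_series_summable_general (a s α : ℝ) (hs : 0 < s)
    (hα : 2 < α) :
    (∀ k : PosM, Summable (fun h : {h : ℤ × ℤ // h ≠ 0 ∧ h ≠ (k : ℤ × ℤ)} =>
      1 / (4 * latSq h * latSq ((k : ℤ × ℤ) - h) * (1 + a ^ 2 * latSq h) ^ (2 * s)))) ∧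
    Summable (fun k : PosM =>
      latSq k ^ (1 - α) * (1 + a ^ 2 * latSq k) ^ (-(s * (1 + α))) *
        ∑' h : {h : ℤ × ℤ // h ≠ 0 ∧ h ≠ (k : ℤ × ℤ)},
          1 / (4 * latSq h * latSq ((k : ℤ × ℤ) - h) * (1 + a ^ 2 * latSq h) ^ (2 * s))) := by
  set S := ∑' h : ℤ × ℤ, (latSq h)⁻¹ ^ 2
  have inner_le (k : PosM) :
      ∑' h : {h : ℤ × ℤ // h ≠ 0 ∧ h ≠ (k : ℤ × ℤ)}, interactionCoeff a s k h ≤ 2 * S :=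
    ((summable_interactionCoeff hs.le k).tsum_subtype_le _ _ (interactionCoeff_nonneg k)).trans
      (tsum_interactionCoeff_le hs.le k)
  refine ⟨fun k => (summable_interactionCoeff hs.le k).subtype _, ?_⟩
  refine ((summable_latSq_rpow (t := 1 - α) (by linarith)).mul_right (2 * S)).subtype
    {k | PosMode k} |>.of_nonneg_of_le (fun k => ?_) fun k => ?_
  all_goals
    have hpow := Real.rpow_nonneg (latSq_nonneg k) (1 - α)
    have hdamp := Real.rpow_nonneg (zero_le_one.trans (one_le_one_add_sq_mul_latSq a k))
      (-(s * (1 + α)))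
    have hinner : 0 ≤ ∑' h : {h : ℤ × ℤ // h ≠ 0 ∧ h ≠ (k : ℤ × ℤ)}, interactionCoeff a s k h :=
      tsum_nonneg fun h => interactionCoeff_nonneg k h
  · exact mul_nonneg (mul_nonneg hpow hdamp) hinner
  · have hdamp_le : (1 + a ^ 2 * latSq k) ^ (-(s * (1 + α))) ≤ 1 :=
      Real.rpow_le_one_of_one_le_of_nonpos (one_le_one_add_sq_mul_latSq a k) (by nlinarith)
    calc _ ≤ latSq k ^ (1 - α) * 1 * (2 * S) := by gcongr; exact inner_le k
      _ = latSq k ^ (1 - α) * (2 * S) := by rw [mul_one]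

/-- For `α > 2`, the double series
`∑_{k>0} k^{2(1-α)}(1+a²k²)^{-s(1+α)} ∑_{h ≠ 0,k} 1/(4h²(k-h)²(1+a²h²)^{2s})`
converges: the inner series converges for each `k>0` and the resulting outer series
converges. -/
theorem avgEuler_vectorField_series_summable (a s α : ℝ) (ha : a ≠ 0) (hs : 0 < s)
    (hα : 2 < α) :
    (∀ k : PosM, Summable (fun h : {h : ℤ × ℤ // h ≠ 0 ∧ h ≠ (k : ℤ × ℤ)} =>
      1 / (4 * latSq h * latSq ((k : ℤ × ℤ) - h) * (1 + a ^ 2 * latSq h) ^ (2 * s)))) ∧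
    Summable (fun k : PosM =>
      latSq k ^ (1 - α) * (1 + a ^ 2 * latSq k) ^ (-(s * (1 + α))) *
        ∑' h : {h : ℤ × ℤ // h ≠ 0 ∧ h ≠ (k : ℤ × ℤ)},
          1 / (4 * latSq h * latSq ((k : ℤ × ℤ) - h) * (1 + a ^ 2 * latSq h) ^ (2 * s))) :=
  avgEuler_vectorField_series_summable_general a s α hs hα
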